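/- arXiv:2603.04880 — 2 statements merged into one kernel-verified Lean document; each statement's English description precedes it below -/
import Mathlib

section
/- Let U ⊆ ℝ × ℝ^d be open and let u : U → ℝ be continuously differentiable in the time variable t and twice continuously differentiable in the space variable x, with u(t,x) > 0 for all (t,x) ∈ U. Let (t,x) ∈ U, let a be a symmetric real d×d matrix, μ ∈ ℝ^d and f ∈ ℝ, and suppose that ∂ₜu(t,x) + (1/2)tr(a D²u(t,x)) + ⟨μ, ∇u(t,x)⟩ − (1/2) f u(t,x) = 0, where ∇u and D²u denote the spatial gradient and spatial Hessian. Then the function V := −2 ln u satisfies ∂ₜV(t,x) + (1/2)tr(a D²V(t,x)) + ⟨μ, ∇V(t,x)⟩ − (1/4)⟨a ∇V(t,x), ∇V(t,x)⟩ + f = 0. -/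
/-!
With `V = -2 log u` one has `∇V = -2 ∇u / u` and `D²V = -2 D²u / u + ½ ∇V ∇Vᵀ`, so the Hessian
term `½ tr(a D²V)` produces exactly `¼ ⟨a ∇V, ∇V⟩`, which the quadratic term cancels. What is left
is `-2 / u` times the linear equation for `u`.
-/

/-- Partial derivative in the time variable. -/
noncomputable def ptime {d : ℕ} (u : ℝ → (Fin d → ℝ) → ℝ) (s : ℝ) (y : Fin d → ℝ) : ℝ :=
  deriv (fun r => u r y) s

/-- Partial derivative in the `i`-th spatial coordinate. -/
noncomputable def pspace {d : ℕ} (i : Fin d) (u : ℝ → (Fin d → ℝ) → ℝ) (s : ℝ)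
    (y : Fin d → ℝ) : ℝ :=
  deriv (fun z => u s (Function.update y i z)) (y i)

open Finset Topology

theorem eventually_update_mem_of_isOpen {ι X Y : Type*} [DecidableEq ι] [TopologicalSpace X]
    [TopologicalSpace Y] {U : Set (X × (ι → Y))} (hU : IsOpen U) {t : X} {x : ι → Y}
    (hx : (t, x) ∈ U) (i : ι) : ∀ᶠ z in 𝓝 (x i), (t, Function.update x i z) ∈ U := by
  have hline : Continuous fun z : Y => (t, Function.update x i z) :=
    continuous_const.prodMk (continuous_const.update i continuous_id)
  refine hline.continuousAt.preimage_mem_nhds (hU.mem_nhds ?_)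
  rwa [Function.update_eq_self]

theorem HasDerivAt.neg_two_mul_log {φ : ℝ → ℝ} {φ' x : ℝ} (hφ : HasDerivAt φ φ' x)
    (hx : φ x ≠ 0) : HasDerivAt (fun z => -2 * Real.log (φ z)) (-2 * (φ' / φ x)) x :=
  (hφ.log hx).const_mul (-2)

section LogTransform

variable {d : ℕ}

noncomputable def logTransform (u : ℝ → (Fin d → ℝ) → ℝ) : ℝ → (Fin d → ℝ) → ℝ :=
  fun s y => -2 * Real.log (u s y)

variable {u : ℝ → (Fin d → ℝ) → ℝ} {s : ℝ} {y : Fin d → ℝ}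

theorem hasDerivAt_logTransform_time {ut : ℝ} (hut : HasDerivAt (fun r => u r y) ut s)
    (hu : u s y ≠ 0) : HasDerivAt (fun r => logTransform u r y) (-2 * (ut / u s y)) s :=
  hut.neg_two_mul_log hu

theorem hasDerivAt_logTransform_update {i : Fin d} {gi : ℝ}
    (hg : HasDerivAt (fun z => u s (Function.update y i z)) gi (y i)) (hu : u s y ≠ 0) :
    HasDerivAt (fun z => logTransform u s (Function.update y i z)) (-2 * (gi / u s y)) (y i) := by
  have hlog := hg.neg_two_mul_log (by rwa [Function.update_eq_self])
  rwa [Function.update_eq_self] at hlog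

theorem pspace_logTransform {i : Fin d} {gi : ℝ}
    (hg : HasDerivAt (fun z => u s (Function.update y i z)) gi (y i)) (hu : u s y ≠ 0) :
    pspace i (logTransform u) s y = -2 * (gi / u s y) :=
  (hasDerivAt_logTransform_update hg hu).deriv

theorem hasDerivAt_pspace_logTransform {U : Set (ℝ × (Fin d → ℝ))} (hU : IsOpen U)
    {g : ℝ → (Fin d → ℝ) → Fin d → ℝ} {H : Fin d → Fin d → ℝ}
    (hg : ∀ p ∈ U, ∀ i,
      HasDerivAt (fun z => u p.1 (Function.update p.2 i z)) (g p.1 p.2 i) (p.2 i))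
    (hu : ∀ p ∈ U, u p.1 p.2 ≠ 0) (hy : (s, y) ∈ U) {i j : Fin d}
    (hH : HasDerivAt (fun z => g s (Function.update y i z) j) (H j i) (y i)) :
    HasDerivAt (fun z => pspace j (logTransform u) s (Function.update y i z))
      (-2 * ((H j i * u s y - g s y j * g s y i) / u s y ^ 2)) (y i) := by
  have hgrad : (fun z => pspace j (logTransform u) s (Function.update y i z)) =ᶠ[𝓝 (y i)]
      fun z => -2 * (g s (Function.update y i z) j / u s (Function.update y i z)) :=
    (eventually_update_mem_of_isOpen hU hy i).mono fun z hz =>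
      pspace_logTransform (hg _ hz j) (hu _ hz)
  have hquot :=
    (hH.div (hg _ hy i) (by rw [Function.update_eq_self]; exact hu _ hy)).const_mul (-2)
  simp only [Function.update_eq_self] at hquot
  exact hquot.congr_of_eventuallyEq hgrad

end LogTransform

theorem logTransform_equation_of_linear {ι : Type*} [Fintype ι] (a H : ι → ι → ℝ) (μ g : ι → ℝ)
    {u ut f : ℝ} (hu : u ≠ 0)
    (h : ut + 1 / 2 * ∑ i, ∑ j, a i j * H j i + ∑ i, μ i * g i - 1 / 2 * f * u = 0) :
    -2 * (ut / u) + 1 / 2 * ∑ i, ∑ j, a i j * (-2 * ((H j i * u - g j * g i) / u ^ 2))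
      + ∑ i, μ i * (-2 * (g i / u))
      - 1 / 4 * ∑ i, (∑ j, a i j * (-2 * (g j / u))) * (-2 * (g i / u)) + f = 0 := by
  have hess : ∀ i j, a i j * (-2 * ((H j i * u - g j * g i) / u ^ 2))
      = -2 / u * (a i j * H j i) + 1 / 2 * (a i j * (-2 * (g j / u)) * (-2 * (g i / u))) := by
    intro i j; field_simp; ring
  have drift : ∀ i, μ i * (-2 * (g i / u)) = -2 / u * (μ i * g i) := by
    intro i; field_simp
  simp only [sum_mul]
  simp only [hess, drift, sum_add_distrib, ← mul_sum]
  linear_combination -2 / u * h - f * mul_inv_cancel₀ hu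

theorem stmt_2_general (d : ℕ) (U : Set (ℝ × (Fin d → ℝ))) (hU : IsOpen U)
    (u : ℝ → (Fin d → ℝ) → ℝ)
    (ut : ℝ → (Fin d → ℝ) → ℝ) (g : ℝ → (Fin d → ℝ) → Fin d → ℝ)
    (H : ℝ → (Fin d → ℝ) → Fin d → Fin d → ℝ)
    -- C^{1,2} regularity on U: time derivative, spatial gradient and spatial Hessian
    -- exist at every point of U and are continuous on U
    (hut : ∀ p ∈ U, HasDerivAt (fun r => u r p.2) (ut p.1 p.2) p.1)
    (hg : ∀ p ∈ U, ∀ i,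
      HasDerivAt (fun z => u p.1 (Function.update p.2 i z)) (g p.1 p.2 i) (p.2 i))
    (hH : ∀ p ∈ U, ∀ i j,
      HasDerivAt (fun z => g p.1 (Function.update p.2 j z) i) (H p.1 p.2 i j) (p.2 j))
    -- positivity of u on U
    (hupos : ∀ p ∈ U, 0 < u p.1 p.2)
    (t : ℝ) (x : Fin d → ℝ) (hmem : (t, x) ∈ U)
    (a : Fin d → Fin d → ℝ)
    (μ : Fin d → ℝ) (f : ℝ)
    -- the linear PDE at (t,x): ∂ₜu + (1/2)tr(a D²u) + ⟨μ, ∇u⟩ − (1/2) f u = 0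
    (hpde : ut t x + (1 / 2) * (∑ i, ∑ j, a i j * H t x j i)
        + (∑ i, μ i * g t x i) - (1 / 2) * f * u t x = 0) :
    -- conclusion for V = −2 ln u
    (DifferentiableAt ℝ (fun r => (fun s y => -2 * Real.log (u s y)) r x) t) ∧
    (∀ i, DifferentiableAt ℝ
      (fun z => (fun s y => -2 * Real.log (u s y)) t (Function.update x i z)) (x i)) ∧
    (∀ i j, DifferentiableAt ℝ
      (fun z => pspace i (fun s y => -2 * Real.log (u s y)) t (Function.update x j z)) (x j)) ∧
    ptime (fun s y => -2 * Real.log (u s y)) t x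
      + (1 / 2) * (∑ i, ∑ j, a i j *
          deriv (fun z =>
            pspace j (fun s y => -2 * Real.log (u s y)) t (Function.update x i z)) (x i))
      + (∑ i, μ i * pspace i (fun s y => -2 * Real.log (u s y)) t x)
      - (1 / 4) * (∑ i, (∑ j, a i j * pspace j (fun s y => -2 * Real.log (u s y)) t x)
          * pspace i (fun s y => -2 * Real.log (u s y)) t x)
      + f = 0 := by
  have hu : u t x ≠ 0 := (hupos _ hmem).ne'
  have htime := hasDerivAt_logTransform_time (hut _ hmem) hu
  have hgrad i := hasDerivAt_logTransform_update (hg _ hmem i) hu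
  have hhess i j :=
    hasDerivAt_pspace_logTransform hU hg (fun p hp => (hupos p hp).ne') hmem (hH _ hmem j i)
  rw [show (fun s y => -2 * Real.log (u s y)) = logTransform u from rfl]
  refine ⟨htime.differentiableAt, fun i => (hgrad i).differentiableAt,
    fun i j => (hhess j i).differentiableAt, ?_⟩
  simp only [ptime, htime.deriv, fun i j => (hhess i j).deriv,
    pspace_logTransform (hg _ hmem _) hu]
  exact logTransform_equation_of_linear a (H t x) μ (g t x) hu hpde

/-- The logarithmic transformation: if `u ∈ C^{1,2}(U)`, `u > 0` on the open set `U`, and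
`∂ₜu + (1/2)tr(a D²u) + ⟨μ, ∇u⟩ − (1/2) f u = 0` at `(t,x) ∈ U`, then `V = −2 ln u`
satisfies `∂ₜV + (1/2)tr(a D²V) + ⟨μ, ∇V⟩ − (1/4)⟨a ∇V, ∇V⟩ + f = 0` at `(t,x)`. -/
theorem stmt_2 (d : ℕ) (hd : 1 ≤ d) (U : Set (ℝ × (Fin d → ℝ))) (hU : IsOpen U)
    (u : ℝ → (Fin d → ℝ) → ℝ)
    (ut : ℝ → (Fin d → ℝ) → ℝ) (g : ℝ → (Fin d → ℝ) → Fin d → ℝ)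
    (H : ℝ → (Fin d → ℝ) → Fin d → Fin d → ℝ)
    -- C^{1,2} regularity on U: time derivative, spatial gradient and spatial Hessian
    -- exist at every point of U and are continuous on U
    (hut : ∀ p ∈ U, HasDerivAt (fun r => u r p.2) (ut p.1 p.2) p.1)
    (hg : ∀ p ∈ U, ∀ i,
      HasDerivAt (fun z => u p.1 (Function.update p.2 i z)) (g p.1 p.2 i) (p.2 i))
    (hH : ∀ p ∈ U, ∀ i j,
      HasDerivAt (fun z => g p.1 (Function.update p.2 j z) i) (H p.1 p.2 i j) (p.2 j))
    (hutc : ContinuousOn (fun p : ℝ × (Fin d → ℝ) => ut p.1 p.2) U)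
    (huc : ContinuousOn (fun p : ℝ × (Fin d → ℝ) => u p.1 p.2) U)
    (hgc : ∀ i, ContinuousOn (fun p : ℝ × (Fin d → ℝ) => g p.1 p.2 i) U)
    (hHc : ∀ i j, ContinuousOn (fun p : ℝ × (Fin d → ℝ) => H p.1 p.2 i j) U)
    -- positivity of u on U
    (hupos : ∀ p ∈ U, 0 < u p.1 p.2)
    (t : ℝ) (x : Fin d → ℝ) (hmem : (t, x) ∈ U)
    (a : Fin d → Fin d → ℝ) (hsymm : ∀ i j, a i j = a j i)
    (μ : Fin d → ℝ) (f : ℝ)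
    -- the linear PDE at (t,x): ∂ₜu + (1/2)tr(a D²u) + ⟨μ, ∇u⟩ − (1/2) f u = 0
    (hpde : ut t x + (1 / 2) * (∑ i, ∑ j, a i j * H t x j i)
        + (∑ i, μ i * g t x i) - (1 / 2) * f * u t x = 0) :
    -- conclusion for V = −2 ln u
    (DifferentiableAt ℝ (fun r => (fun s y => -2 * Real.log (u s y)) r x) t) ∧
    (∀ i, DifferentiableAt ℝ
      (fun z => (fun s y => -2 * Real.log (u s y)) t (Function.update x i z)) (x i)) ∧
    (∀ i j, DifferentiableAt ℝ
      (fun z => pspace i (fun s y => -2 * Real.log (u s y)) t (Function.update x j z)) (x j)) ∧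
    ptime (fun s y => -2 * Real.log (u s y)) t x
      + (1 / 2) * (∑ i, ∑ j, a i j *
          deriv (fun z =>
            pspace j (fun s y => -2 * Real.log (u s y)) t (Function.update x i z)) (x i))
      + (∑ i, μ i * pspace i (fun s y => -2 * Real.log (u s y)) t x)
      - (1 / 4) * (∑ i, (∑ j, a i j * pspace j (fun s y => -2 * Real.log (u s y)) t x)
          * pspace i (fun s y => -2 * Real.log (u s y)) t x)
      + f = 0 :=
  stmt_2_general d U hU u ut g H hut hg hH hupos t x hmem a μ f hpde
end

section
/- Let U ⊆ ℝ × ℝ^d be open and let u : U → ℝ be continuously differentiable in the time variable t and twice continuously differentiable in the space variable x, with u(t,x) ≥ 0 for all (t,x) ∈ U, and let λ > 0. Let (t,x) ∈ U, let a be a symmetric real d×d matrix, μ ∈ ℝ^d and f ∈ ℝ, and suppose that ∂ₜu(t,x) + (1/2)tr(a D²u(t,x)) + ⟨μ, ∇u(t,x)⟩ − (1/2) f u(t,x) = 0. Then the function V^λ := −2 ln(u + λ) satisfies ∂ₜV^λ(t,x) + (1/2)tr(a D²V^λ(t,x)) + ⟨μ, ∇V^λ(t,x)⟩ − (1/4)⟨a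 ∇V^λ(t,x), ∇V^λ(t,x)⟩ + (u(t,x)/(u(t,x)+λ)) f = 0. -/
/-!
Write `V = F ∘ u` with `F v = -2 log (v + λ)`, smooth near `u(U) ⊆ [0, ∞)`. The chain rule gives
`∂ₜV = F'(u) ∂ₜu`, `∇V = F'(u) ∇u` and `D²V = F'(u) D²u + F''(u) ∇u ∇uᵀ`; the last needs
`∇V = F'(u) ∇u` on a whole neighbourhood of `x`, which is where the openness of `U` enters. So the
left-hand side equals
`F'(u) (∂ₜu + ½ tr(a D²u) + ⟨μ, ∇u⟩) + (½ F''(u) - ¼ F'(u)²) ⟨a ∇u, ∇u⟩ + u f / (u + λ)`.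
For this `F` we have `½ F'' = ¼ F'² = 2 / (u + λ)²`, so the gradient terms cancel, and the PDE
turns the rest into `-u f / (u + λ) + u f / (u + λ) = 0`.
-/

open Filter Topology Function

theorem eventually_prodMk_update_mem {X ι Y : Type*} [TopologicalSpace X] [TopologicalSpace Y]
    [DecidableEq ι] {s : Set (X × (ι → Y))} {t : X} {x : ι → Y} (hs : s ∈ 𝓝 (t, x)) (i : ι) :
    ∀ᶠ z in 𝓝 (x i), (t, update x i z) ∈ s := by
  have hcont : Continuous fun z : Y => (t, update x i z) :=
    continuous_const.prodMk (continuous_const.update i continuous_id)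
  exact hcont.continuousAt.preimage_mem_nhds (by rwa [update_eq_self])

theorem hasDerivAt_const_mul_log_add (k : ℝ) {c v : ℝ} (hv : v + c ≠ 0) :
    HasDerivAt (fun w => k * Real.log (w + c)) (k / (v + c)) v := by
  simpa [div_eq_mul_inv] using (((hasDerivAt_id v).add_const c).log hv).const_mul k

theorem hasDerivAt_const_div_add (k : ℝ) {c v : ℝ} (hv : v + c ≠ 0) :
    HasDerivAt (fun w => k / (w + c)) (-k / (v + c) ^ 2) v := by
  simpa [div_eq_mul_inv, neg_div] using (((hasDerivAt_id v).add_const c).inv hv).const_mul k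

section ChainRule

variable {d : ℕ} {U : Set (ℝ × (Fin d → ℝ))} {u : ℝ → (Fin d → ℝ) → ℝ}
  {g : ℝ → (Fin d → ℝ) → Fin d → ℝ} {F F' : ℝ → ℝ}

theorem HasDerivAt.comp_update {v : (Fin d → ℝ) → ℝ} {y : Fin d → ℝ} {i : Fin d} {c v' : ℝ}
    (hF : HasDerivAt F c (v y)) (hv : HasDerivAt (fun z => v (update y i z)) v' (y i)) :
    HasDerivAt (fun z => F (v (update y i z))) (c * v') (y i) := by
  have hF : HasDerivAt F c (v (update y i (y i))) := by rwa [update_eq_self]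
  exact hF.comp (y i) hv

theorem pspace_comp_eq (hF : ∀ p ∈ U, HasDerivAt F (F' (u p.1 p.2)) (u p.1 p.2))
    (hg : ∀ p ∈ U, ∀ i,
      HasDerivAt (fun z => u p.1 (update p.2 i z)) (g p.1 p.2 i) (p.2 i))
    {p : ℝ × (Fin d → ℝ)} (hp : p ∈ U) (i : Fin d) :
    pspace i (fun s y => F (u s y)) p.1 p.2 = F' (u p.1 p.2) * g p.1 p.2 i :=
  ((hF p hp).comp_update (hg p hp i)).deriv

theorem hasDerivAt_pspace_comp_update (hU : IsOpen U) {t : ℝ} {x : Fin d → ℝ}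
    (hmem : (t, x) ∈ U) (hF : ∀ p ∈ U, HasDerivAt F (F' (u p.1 p.2)) (u p.1 p.2))
    {F'' : ℝ} (hF' : HasDerivAt F' F'' (u t x))
    (hg : ∀ p ∈ U, ∀ i,
      HasDerivAt (fun z => u p.1 (update p.2 i z)) (g p.1 p.2 i) (p.2 i))
    {i j : Fin d} {h : ℝ} (hgj : HasDerivAt (fun z => g t (update x i z) j) h (x i)) :
    HasDerivAt (fun z => pspace j (fun s y => F (u s y)) t (update x i z))
      (F'' * g t x i * g t x j + F' (u t x) * h) (x i) := by
  have hform : (fun z => pspace j (fun s y => F (u s y)) t (update x i z))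
      =ᶠ[𝓝 (x i)] fun z => F' (u t (update x i z)) * g t (update x i z) j := by
    filter_upwards [eventually_prodMk_update_mem (hU.mem_nhds hmem) i] with z hz
    exact pspace_comp_eq hF hg hz j
  have hprod := (hF'.comp_update (hg (t, x) hmem i)).mul hgj
  rw [update_eq_self] at hprod
  exact hprod.congr_of_eventuallyEq hform

end ChainRule

section QuadraticForm

variable {d : ℕ} (a : Fin d → Fin d → ℝ) (g : Fin d → ℝ)

theorem sum_sum_mul_hessian_comp (H : Fin d → Fin d → ℝ) (c₁ c₂ : ℝ) :
    ∑ i, ∑ j, a i j * (c₂ * g i * g j + c₁ * H j i)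
      = c₁ * ∑ i, ∑ j, a i j * H j i + c₂ * ∑ i, (∑ j, a i j * g j) * g i := by
  simp only [Finset.mul_sum, Finset.sum_mul, ← Finset.sum_add_distrib]
  exact Finset.sum_congr rfl fun i _ => Finset.sum_congr rfl fun j _ => by ring

theorem sum_sum_mul_const_mul (c : ℝ) :
    ∑ i, (∑ j, a i j * (c * g j)) * (c * g i) = c ^ 2 * ∑ i, (∑ j, a i j * g j) * g i := by
  simp only [Finset.mul_sum, Finset.sum_mul]
  exact Finset.sum_congr rfl fun i _ => Finset.sum_congr rfl fun j _ => by ring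

end QuadraticForm

theorem stmt_3_general (d : ℕ) (U : Set (ℝ × (Fin d → ℝ))) (hU : IsOpen U)
    (u : ℝ → (Fin d → ℝ) → ℝ)
    (ut : ℝ → (Fin d → ℝ) → ℝ) (g : ℝ → (Fin d → ℝ) → Fin d → ℝ)
    (H : ℝ → (Fin d → ℝ) → Fin d → Fin d → ℝ)
    -- C^{1,2} regularity on U: time derivative, spatial gradient and spatial Hessian
    -- exist at every point of U and are continuous on U
    (hut : ∀ p ∈ U, HasDerivAt (fun r => u r p.2) (ut p.1 p.2) p.1)
    (hg : ∀ p ∈ U, ∀ i,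
      HasDerivAt (fun z => u p.1 (Function.update p.2 i z)) (g p.1 p.2 i) (p.2 i))
    (hH : ∀ p ∈ U, ∀ i j,
      HasDerivAt (fun z => g p.1 (Function.update p.2 j z) i) (H p.1 p.2 i j) (p.2 j))
    -- nonnegativity of u on U, and λ > 0
    (hupos : ∀ p ∈ U, 0 ≤ u p.1 p.2)
    (lam : ℝ) (hlam : 0 < lam)
    (t : ℝ) (x : Fin d → ℝ) (hmem : (t, x) ∈ U)
    (a : Fin d → Fin d → ℝ)
    (μ : Fin d → ℝ) (f : ℝ)
    -- the linear PDE at (t,x): ∂ₜu + (1/2)tr(a D²u) + ⟨μ, ∇u⟩ − (1/2) f u = 0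
    (hpde : ut t x + (1 / 2) * (∑ i, ∑ j, a i j * H t x j i)
        + (∑ i, μ i * g t x i) - (1 / 2) * f * u t x = 0) :
    -- conclusion for V^λ = −2 ln (u + λ)
    (DifferentiableAt ℝ (fun r => (fun s y => -2 * Real.log (u s y + lam)) r x) t) ∧
    (∀ i, DifferentiableAt ℝ
      (fun z => (fun s y => -2 * Real.log (u s y + lam)) t (Function.update x i z)) (x i)) ∧
    (∀ i j, DifferentiableAt ℝ
      (fun z => pspace i (fun s y => -2 * Real.log (u s y + lam)) t (Function.update x j z)) (x j)) ∧
    ptime (fun s y => -2 * Real.log (u s y + lam)) t x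
      + (1 / 2) * (∑ i, ∑ j, a i j *
          deriv (fun z =>
            pspace j (fun s y => -2 * Real.log (u s y + lam)) t (Function.update x i z)) (x i))
      + (∑ i, μ i * pspace i (fun s y => -2 * Real.log (u s y + lam)) t x)
      - (1 / 4) * (∑ i, (∑ j, a i j * pspace j (fun s y => -2 * Real.log (u s y + lam)) t x)
          * pspace i (fun s y => -2 * Real.log (u s y + lam)) t x)
      + (u t x / (u t x + lam)) * f = 0 := by
  set V := fun s y => -2 * Real.log (u s y + lam)
  have hc : ∀ p ∈ U, u p.1 p.2 + lam ≠ 0 := fun p hp =>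
    (add_pos_of_nonneg_of_pos (hupos p hp) hlam).ne'
  have hF : ∀ p ∈ U, HasDerivAt (fun v => -2 * Real.log (v + lam))
      ((fun v => -2 / (v + lam)) (u p.1 p.2)) (u p.1 p.2) := fun p hp =>
    hasDerivAt_const_mul_log_add (-2) (hc p hp)
  have hF' : HasDerivAt (fun v => -2 / (v + lam)) (2 / (u t x + lam) ^ 2) (u t x) := by
    simpa using hasDerivAt_const_div_add (-2) (hc (t, x) hmem)
  have hVt := (hF (t, x) hmem).comp t (hut (t, x) hmem)
  have hVx := fun i => (hF (t, x) hmem).comp_update (hg (t, x) hmem i)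
  have hVxx := fun i j => hasDerivAt_pspace_comp_update hU hmem hF hF' hg (hH (t, x) hmem j i)
  refine ⟨hVt.differentiableAt, fun i => (hVx i).differentiableAt,
    fun i j => (hVxx j i).differentiableAt, ?_⟩
  have hpt : ptime V t x = -2 / (u t x + lam) * ut t x := hVt.deriv
  have hps : ∀ i, pspace i V t x = -2 / (u t x + lam) * g t x i := fun i => (hVx i).deriv
  have hpss : ∀ i j, deriv (fun z => pspace j V t (update x i z)) (x i)
      = 2 / (u t x + lam) ^ 2 * g t x i * g t x j + -2 / (u t x + lam) * H t x j i :=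
    fun i j => (hVxx i j).deriv
  simp only [hpt, hps, hpss, sum_sum_mul_hessian_comp, sum_sum_mul_const_mul,
    mul_left_comm (μ _), ← Finset.mul_sum]
  have hctx := hc (t, x) hmem
  field_simp
  linear_combination (-8 * (u t x + lam)) * hpde

/-- The λ-regularised logarithmic transformation: if `u ∈ C^{1,2}(U)`, `u ≥ 0` on the open
set `U`, `λ > 0`, and `∂ₜu + (1/2)tr(a D²u) + ⟨μ, ∇u⟩ − (1/2) f u = 0` at `(t,x) ∈ U`, then
`V^λ = −2 ln (u + λ)` satisfies
`∂ₜV^λ + (1/2)tr(a D²V^λ) + ⟨μ, ∇V^λ⟩ − (1/4)⟨a ∇V^λ, ∇V^λ⟩ + (u/(u+λ)) f = 0` at `(t,x)`. -/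
theorem stmt_3 (d : ℕ) (hd : 1 ≤ d) (U : Set (ℝ × (Fin d → ℝ))) (hU : IsOpen U)
    (u : ℝ → (Fin d → ℝ) → ℝ)
    (ut : ℝ → (Fin d → ℝ) → ℝ) (g : ℝ → (Fin d → ℝ) → Fin d → ℝ)
    (H : ℝ → (Fin d → ℝ) → Fin d → Fin d → ℝ)
    -- C^{1,2} regularity on U: time derivative, spatial gradient and spatial Hessian
    -- exist at every point of U and are continuous on U
    (hut : ∀ p ∈ U, HasDerivAt (fun r => u r p.2) (ut p.1 p.2) p.1)
    (hg : ∀ p ∈ U, ∀ i,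
      HasDerivAt (fun z => u p.1 (Function.update p.2 i z)) (g p.1 p.2 i) (p.2 i))
    (hH : ∀ p ∈ U, ∀ i j,
      HasDerivAt (fun z => g p.1 (Function.update p.2 j z) i) (H p.1 p.2 i j) (p.2 j))
    (hutc : ContinuousOn (fun p : ℝ × (Fin d → ℝ) => ut p.1 p.2) U)
    (huc : ContinuousOn (fun p : ℝ × (Fin d → ℝ) => u p.1 p.2) U)
    (hgc : ∀ i, ContinuousOn (fun p : ℝ × (Fin d → ℝ) => g p.1 p.2 i) U)
    (hHc : ∀ i j, ContinuousOn (fun p : ℝ × (Fin d → ℝ) => H p.1 p.2 i j) U)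
    -- nonnegativity of u on U, and λ > 0
    (hupos : ∀ p ∈ U, 0 ≤ u p.1 p.2)
    (lam : ℝ) (hlam : 0 < lam)
    (t : ℝ) (x : Fin d → ℝ) (hmem : (t, x) ∈ U)
    (a : Fin d → Fin d → ℝ) (hsymm : ∀ i j, a i j = a j i)
    (μ : Fin d → ℝ) (f : ℝ)
    -- the linear PDE at (t,x): ∂ₜu + (1/2)tr(a D²u) + ⟨μ, ∇u⟩ − (1/2) f u = 0
    (hpde : ut t x + (1 / 2) * (∑ i, ∑ j, a i j * H t x j i)
        + (∑ i, μ i * g t x i) - (1 / 2) * f * u t x = 0) :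
    -- conclusion for V^λ = −2 ln (u + λ)
    (DifferentiableAt ℝ (fun r => (fun s y => -2 * Real.log (u s y + lam)) r x) t) ∧
    (∀ i, DifferentiableAt ℝ
      (fun z => (fun s y => -2 * Real.log (u s y + lam)) t (Function.update x i z)) (x i)) ∧
    (∀ i j, DifferentiableAt ℝ
      (fun z => pspace i (fun s y => -2 * Real.log (u s y + lam)) t (Function.update x j z)) (x j)) ∧
    ptime (fun s y => -2 * Real.log (u s y + lam)) t x
      + (1 / 2) * (∑ i, ∑ j, a i j *
          deriv (fun z =>
            pspace j (fun s y => -2 * Real.log (u s y + lam)) t (Function.update x i z)) (x i))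
      + (∑ i, μ i * pspace i (fun s y => -2 * Real.log (u s y + lam)) t x)
      - (1 / 4) * (∑ i, (∑ j, a i j * pspace j (fun s y => -2 * Real.log (u s y + lam)) t x)
          * pspace i (fun s y => -2 * Real.log (u s y + lam)) t x)
      + (u t x / (u t x + lam)) * f = 0 :=
  stmt_3_general d U hU u ut g H hut hg hH hupos lam hlam t x hmem a μ f hpde
end
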